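/- arXiv:2105.07668 — 3 statements merged into one kernel-verified Lean document; each statement's English description precedes it below -/
import Mathlib

section
/- Let μ be a probability measure on pairs of real matrices (A, B) with A of size d_x × d_x and B of size d_x × d_u, and let K be a fixed real d_u × d_x matrix. Call a pair (A, B) stabilized by K if the spectral radius of A + B·K (i.e., the maximum modulus of its complex eigenvalues) is strictly less than 1, and let p = μ{(A,B) : (A,B) is stabilized by K}. Fix ε, ε_val ∈ (0,1) and α ∈ (0,1), and let (A_1,B_1), …, (A_M,B_M) be independent samples from μ. If p < 1 − ε − ε_val and M ≥ log(1/α)/(2·ε_val²), then the probability that the empirical stability frequency (1/M)·#{i : (A_i,B_i) is stabilized by K} is at least 1 − ε is at most α. (In other words, a controller whose true stabilization probability falls below the threshold 1 − ε − ε_val passes the sample-based validation test with probability at most α.) -/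
open MeasureTheory

/-- Matrices over a measurable space of entries form a measurable space
(with the product σ-algebra, as for the underlying function type). -/
instance {m n α : Type*} [MeasurableSpace α] : MeasurableSpace (Matrix m n α) :=
  (inferInstance : MeasurableSpace (m → n → α))

/-- The pair `(A, B) = (S.1, S.2)` is stabilized by the feedback gain `K` if the
spectral radius of `A + B·K` is strictly less than `1`, i.e. every complex
eigenvalue (root of the characteristic polynomial over `ℂ`) of `A + B·K`
has modulus strictly less than `1`. -/
def StabilizedBy {dx du : ℕ} (K : Matrix (Fin du) (Fin dx) ℝ)
    (S : Matrix (Fin dx) (Fin dx) ℝ × Matrix (Fin dx) (Fin du) ℝ) : Prop :=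
  ∀ z ∈ ((S.1 + S.2 * K).map (algebraMap ℝ ℂ)).charpoly.roots, ‖z‖ < 1

/-!
Accepting means that at least `M (1 - ε) ≥ M (p + ε_val)` of the `M` i.i.d. Bernoulli(`p`)
indicators `1[Sᵢ stabilized]` equal one, i.e. that their centred sum exceeds `M ε_val`. Each
centred indicator is `1/4`-sub-Gaussian by Hoeffding's lemma, so Hoeffding's inequality bounds
this probability by `exp (-2 M ε_val²)`, which is at most `α` by the choice of `M`.
-/

open ProbabilityTheory

lemma natCard_subtype_mem_eq_sum_indicator {α ι : Type*} [Fintype ι] (s : Set α) (ω : ι → α) :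
    (Nat.card {i // ω i ∈ s} : ℝ) = ∑ i, s.indicator 1 (ω i) := by
  classical
  simp [Set.indicator_apply, Finset.sum_boole, Nat.card_eq_fintype_card, Fintype.card_subtype]

section Hoeffding

variable {α ι : Type*} [MeasurableSpace α] [Fintype ι] (μ : Measure α) [IsProbabilityMeasure μ]

lemma hasSubgaussianMGF_indicator_sub_measureReal {s : Set α} (hs : MeasurableSet s) :
    HasSubgaussianMGF (fun x ↦ s.indicator 1 x - μ.real s) ((1 / 2) ^ 2) μ := by
  have h := hasSubgaussianMGF_of_mem_Icc (μ := μ) (a := 0) (b := 1)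
    (measurable_one.indicator hs).aemeasurable
    (ae_of_all _ fun x ↦ by by_cases hx : x ∈ s <;> simp [hx])
  simpa [integral_indicator_one hs] using h

lemma measureReal_pi_card_mul_add_le_sum_indicator_le {s : Set α} (hs : MeasurableSet s) {t : ℝ}
    (ht : 0 ≤ t) :
    (Measure.pi fun _ : ι ↦ μ).real
        {ω | Fintype.card ι * (μ.real s + t) ≤ ∑ i, s.indicator 1 (ω i)}
      ≤ Real.exp (-2 * Fintype.card ι * t ^ 2) := by
  have h_indep : iIndepFun (fun i (ω : ι → α) ↦ s.indicator 1 (ω i) - μ.real s)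
      (Measure.pi fun _ ↦ μ) :=
    iIndepFun_pi fun _ ↦ ((measurable_one.indicator hs).sub_const _).aemeasurable
  have h_subG (i : ι) : HasSubgaussianMGF (fun ω : ι → α ↦ s.indicator 1 (ω i) - μ.real s)
      ((1 / 2) ^ 2) (Measure.pi fun _ ↦ μ) := by
    refine .of_map (X := fun x ↦ s.indicator 1 x - μ.real s)
      (measurable_pi_apply i).aemeasurable ?_
    rw [(measurePreserving_eval (fun _ : ι ↦ μ) i).map_eq]
    exact hasSubgaussianMGF_indicator_sub_measureReal μ hs
  convert HasSubgaussianMGF.measure_sum_ge_le_of_iIndepFun h_indep (s := Finset.univ)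
    (fun i _ ↦ h_subG i) (ε := Fintype.card ι * t) (by positivity) using 2
  · ext ω
    simp only [Set.mem_ofPred_eq, Finset.sum_sub_distrib, Finset.sum_const, Finset.card_univ,
      nsmul_eq_mul, le_sub_iff_add_le, mul_add, add_comm]
  · obtain h | h := (Fintype.card ι).eq_zero_or_pos
    · simp [h]
    · push_cast [Finset.sum_const, Finset.card_univ, nsmul_eq_mul]
      field_simp

theorem measure_pi_measureReal_add_le_card_div_le (s : Set α) {t : ℝ} (ht : 0 ≤ t) :
    (Measure.pi fun _ : ι ↦ μ)
        {ω | μ.real s + t ≤ (Nat.card {i // ω i ∈ s} : ℝ) / Fintype.card ι}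
      ≤ ENNReal.ofReal (Real.exp (-2 * Fintype.card ι * t ^ 2)) := by
  -- `s` need not be measurable; its measurable hull has the same measure and contains it.
  set T := toMeasurable μ s
  have h_event : {ω : ι → α | μ.real s + t ≤ (Nat.card {i // ω i ∈ s} : ℝ) / Fintype.card ι}
      ⊆ {ω | Fintype.card ι * (μ.real T + t) ≤ ∑ i, T.indicator 1 (ω i)} := by
    intro ω hω
    simp only [Set.mem_ofPred_eq] at hω ⊢
    rw [natCard_subtype_mem_eq_sum_indicator] at hω
    rw [measureReal_def, measure_toMeasurable, ← measureReal_def]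
    calc (Fintype.card ι : ℝ) * (μ.real s + t) ≤ ∑ i, s.indicator 1 (ω i) := by
          obtain h | h := (Fintype.card ι).eq_zero_or_pos
          · simp [h, Finset.sum_nonneg, Set.indicator_nonneg]
          · rwa [mul_comm, ← le_div_iff₀ (by positivity)]
      _ ≤ ∑ i, T.indicator 1 (ω i) := Finset.sum_le_sum fun i _ ↦
          Set.indicator_le_indicator_of_subset (subset_toMeasurable μ s) (fun _ ↦ zero_le_one) _
  calc _ ≤ _ := measure_mono h_event
    _ = ENNReal.ofReal ((Measure.pi fun _ : ι ↦ μ).real _) := (ofReal_measureReal).symm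
    _ ≤ _ := ENNReal.ofReal_le_ofReal <|
      measureReal_pi_card_mul_add_le_sum_indicator_le μ (measurableSet_toMeasurable μ s) ht

end Hoeffding

theorem validation_low_stabilization_rarely_accepted_general {dx du : ℕ}
    (μ : Measure (Matrix (Fin dx) (Fin dx) ℝ × Matrix (Fin dx) (Fin du) ℝ))
    [IsProbabilityMeasure μ]
    (K : Matrix (Fin du) (Fin dx) ℝ)
    (ε εval α : ℝ)
    (hεval : εval ∈ Set.Ioo (0 : ℝ) 1)
    (hα : α ∈ Set.Ioo (0 : ℝ) 1)
    (M : ℕ)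
    (hp : μ {S | StabilizedBy K S} < ENNReal.ofReal (1 - ε - εval))
    (hM : (M : ℝ) ≥ Real.log (1 / α) / (2 * εval ^ 2)) :
    (Measure.pi fun _ : Fin M => μ)
      {ω | (1 - ε : ℝ) ≤ (Nat.card {i : Fin M // StabilizedBy K (ω i)} : ℝ) / M}
      ≤ ENNReal.ofReal α := by
  have h_threshold : μ.real {S | StabilizedBy K S} + εval ≤ 1 - ε := by
    linarith [ENNReal.toReal_lt_of_lt_ofReal hp, measureReal_def μ {S | StabilizedBy K S}]
  have h_exp : Real.exp (-2 * M * εval ^ 2) ≤ α := by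
    rw [← Real.exp_log hα.1, Real.exp_le_exp]
    rw [ge_iff_le, div_le_iff₀ (by nlinarith [hεval.1]), one_div, Real.log_inv] at hM
    linarith
  calc _ ≤ (Measure.pi fun _ : Fin M => μ) {ω | μ.real {S | StabilizedBy K S} + εval
          ≤ (Nat.card {i // ω i ∈ {S | StabilizedBy K S}} : ℝ) / Fintype.card (Fin M)} := by
        refine measure_mono fun ω hω ↦ ?_
        simpa only [Set.mem_ofPred_eq, Fintype.card_fin] using h_threshold.trans hω
    _ ≤ ENNReal.ofReal (Real.exp (-2 * Fintype.card (Fin M) * εval ^ 2)) :=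
        measure_pi_measureReal_add_le_card_div_le μ _ hεval.1.le
    _ ≤ ENNReal.ofReal α := by
        rw [Fintype.card_fin]
        exact ENNReal.ofReal_le_ofReal h_exp

/-- If the true stabilization probability `p = μ {S | StabilizedBy K S}` is smaller than
`1 - ε - ε_val` and `M ≥ log(1/α)/(2 ε_val²)`, then the probability (over `M` i.i.d.
samples from `μ`, i.e. under the product measure) that the empirical stability frequency
is at least `1 - ε` is at most `α`. -/
theorem validation_low_stabilization_rarely_accepted {dx du : ℕ}
    (μ : Measure (Matrix (Fin dx) (Fin dx) ℝ × Matrix (Fin dx) (Fin du) ℝ))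
    [IsProbabilityMeasure μ]
    (K : Matrix (Fin du) (Fin dx) ℝ)
    (ε εval α : ℝ)
    (hε : ε ∈ Set.Ioo (0 : ℝ) 1) (hεval : εval ∈ Set.Ioo (0 : ℝ) 1)
    (hα : α ∈ Set.Ioo (0 : ℝ) 1)
    (M : ℕ)
    (hp : μ {S | StabilizedBy K S} < ENNReal.ofReal (1 - ε - εval))
    (hM : (M : ℝ) ≥ Real.log (1 / α) / (2 * εval ^ 2)) :
    (Measure.pi fun _ : Fin M => μ)
      {ω | (1 - ε : ℝ) ≤ (Nat.card {i : Fin M // StabilizedBy K (ω i)} : ℝ) / M}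
      ≤ ENNReal.ofReal α :=
  validation_low_stabilization_rarely_accepted_general μ K ε εval α hεval hα M hp hM
end

section
/- Let μ be a probability measure on pairs of real matrices (A, B) with A of size d_x × d_x and B of size d_x × d_u, let C be a measurable set of such pairs with μ(C) = c > 0, and let μ_c denote the conditional measure μ(· | C). Let K be a fixed real d_u × d_x matrix, and call a pair (A, B) stabilized by K if the spectral radius of A + B·K (i.e., the maximum modulus of its complex eigenvalues) is strictly less than 1. Fix ε, ε_val ∈ (0,1) and α ∈ (0,1), and let (A_1,B_1), …, (A_M,B_M) be independent samples from the conditional measure μ_c with M ≥ log(1/α)/(2·ε_val²). If the probability under the full (unconditioned) measure μ that (A, B) is stabilized by K is strictly less than c − (ε + ε_val), then the probability that the empirical stability frequency (1/M)·#{i : (A_i,B_i) is stabilized by K} is at least 1 − ε is at most α. (Equivalently: with probability at least 1 − α over the validation samples, either the controller fails validation or the true stabilization probability under μ is at least c − (ε + ε_val).) -/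
open MeasureTheory

/-!
Conditioning on `C` multiplies probabilities by at most `1 / c`, so under `μ(·|C)` the
stabilization probability `p` is below `(c - (ε + εval)) / c ≤ 1 - (ε + εval)`. Passing validation
forces the empirical frequency of `M` i.i.d. Bernoulli(`p`) samples to exceed `p` by `εval`, which
by Hoeffding's inequality has probability at most `exp (-2 M εval²) ≤ α`.
-/

open ProbabilityTheory Real
open scoped NNReal ENNReal

theorem measureReal_pi_natCard_mem_ge_le {ι Ω : Type*} [Fintype ι] [MeasurableSpace Ω]
    (ν : Measure Ω) [IsProbabilityMeasure ν] {E : Set Ω} (hE : MeasurableSet E)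
    {t : ℝ} (ht : 0 ≤ t) :
    (Measure.pi fun _ : ι => ν).real
        {ω | (Fintype.card ι : ℝ) * (ν.real E + t) ≤ Nat.card {i // ω i ∈ E}}
      ≤ exp (-2 * Fintype.card ι * t ^ 2) := by
  classical
  set f : Ω → ℝ := E.indicator 1
  have hf : Measurable f := measurable_one.indicator hE
  have hmean : ν[f] = ν.real E := integral_indicator_one hE
  have hsubG (i : ι) : HasSubgaussianMGF (fun ω : ι → Ω => f (ω i) - ν.real E)
      ((‖(1 : ℝ) - 0‖₊ / 2) ^ 2) (Measure.pi fun _ => ν) := by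
    have h := hasSubgaussianMGF_of_mem_Icc (μ := ν) (a := 0) (b := 1) hf.aemeasurable
      (ae_of_all _ fun x => ⟨Set.indicator_nonneg (fun _ _ => zero_le_one) x,
        Set.indicator_le_self' (fun _ _ => zero_le_one) x⟩)
    rw [hmean] at h
    refine HasSubgaussianMGF.of_map (X := fun x => f x - ν.real E) (Y := fun ω : ι → Ω => ω i)
      (measurable_pi_apply i).aemeasurable ?_
    rwa [(measurePreserving_eval (fun _ : ι => ν) i).map_eq]
  have hindep : iIndepFun (fun i (ω : ι → Ω) => f (ω i) - ν.real E) (Measure.pi fun _ => ν) :=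
    iIndepFun_pi (X := fun _ x => f x - ν.real E) fun _ => (hf.sub_const _).aemeasurable
  have hoeffding := HasSubgaussianMGF.measure_sum_ge_le_of_iIndepFun hindep (s := Finset.univ)
    (fun i _ => hsubG i) (mul_nonneg (Nat.cast_nonneg (Fintype.card ι)) ht)
  have hsum (ω : ι → Ω) : ∑ i, (f (ω i) - ν.real E)
      = Nat.card {i // ω i ∈ E} - Fintype.card ι * ν.real E := by
    simp [f, Finset.sum_sub_distrib, Set.indicator_apply, Finset.sum_boole,
      Nat.card_eq_fintype_card, Fintype.card_subtype]
  have hvar : 2 * ((∑ _i : ι, (‖(1 : ℝ) - 0‖₊ / 2) ^ 2 : ℝ≥0) : ℝ) = Fintype.card ι / 2 := by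
    simp only [sub_zero, nnnorm_one, Finset.sum_const, Finset.card_univ, nsmul_eq_mul]
    push_cast; ring
  convert hoeffding using 3
  · ext ω
    simp only [hsum]
    constructor <;> intro <;> linarith
  · rw [hvar]
    rcases (Fintype.card ι).eq_zero_or_pos with h | h
    · simp [h]
    · field_simp

theorem ProbabilityTheory.cond_apply_le_div {Ω : Type*} [MeasurableSpace Ω] (μ : Measure Ω)
    (s t : Set Ω) : μ[t|s] ≤ μ t / μ s := by
  rw [cond, Measure.smul_apply, smul_eq_mul, div_eq_mul_inv, mul_comm]
  gcongr
  exact Measure.restrict_le_self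

theorem ProbabilityTheory.measureReal_cond_le_one_sub {Ω : Type*} [MeasurableSpace Ω]
    (μ : Measure Ω) [IsProbabilityMeasure μ] {s t : Set Ω} {c δ : ℝ}
    (hs : μ s = ENNReal.ofReal c) (hδ : 0 ≤ δ) (ht : μ t < ENNReal.ofReal (c - δ)) :
    (μ[|s]).real t ≤ 1 - δ := by
  have hδc : δ < c := sub_pos.1 (ENNReal.ofReal_pos.1 (zero_le.trans_lt ht))
  have hc1 : c ≤ 1 := ENNReal.ofReal_le_one.1 (hs ▸ prob_le_one)
  refine ENNReal.toReal_le_of_le_ofReal (by linarith) ?_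
  calc μ[t|s] ≤ μ t / μ s := cond_apply_le_div μ s t
    _ ≤ ENNReal.ofReal (c - δ) / ENNReal.ofReal c := by rw [hs]; gcongr
    _ = ENNReal.ofReal ((c - δ) / c) := (ENNReal.ofReal_div_of_pos (by linarith)).symm
    _ ≤ ENNReal.ofReal (1 - δ) := by
      gcongr
      rw [div_le_iff₀ (by linarith)]
      nlinarith

theorem setOf_le_natCard_div_subset {Ω : Type*} {P E : Set Ω} (hPE : P ⊆ E) {M : ℕ}
    (hM : 0 < M) {a b : ℝ} (hba : b ≤ a) :
    {ω : Fin M → Ω | a ≤ (Nat.card {i // ω i ∈ P} : ℝ) / M} ⊆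
      {ω | (M : ℝ) * b ≤ Nat.card {i // ω i ∈ E}} := by
  intro ω hω
  have hcount : Nat.card {i // ω i ∈ P} ≤ Nat.card {i // ω i ∈ E} :=
    Nat.card_mono (Set.toFinite _) fun i hi => hPE hi
  calc (M : ℝ) * b ≤ M * a := by gcongr
    _ ≤ Nat.card {i // ω i ∈ P} := (le_div_iff₀' (Nat.cast_pos.2 hM)).1 hω
    _ ≤ Nat.card {i // ω i ∈ E} := by exact_mod_cast hcount

theorem Real.exp_neg_two_mul_mul_sq_le {α t M : ℝ} (hα : 0 < α) (ht : 0 < t)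
    (hM : log (1 / α) / (2 * t ^ 2) ≤ M) : exp (-2 * M * t ^ 2) ≤ α := by
  rw [div_le_iff₀ (by positivity), one_div, log_inv] at hM
  calc exp (-2 * M * t ^ 2) ≤ exp (log α) := exp_le_exp.2 (by linarith)
    _ = α := exp_log hα

theorem truncated_validation_guarantee_general {dx du : ℕ}
    (μ : Measure (Matrix (Fin dx) (Fin dx) ℝ × Matrix (Fin dx) (Fin du) ℝ))
    [IsProbabilityMeasure μ]
    (C : Set (Matrix (Fin dx) (Fin dx) ℝ × Matrix (Fin dx) (Fin du) ℝ))
    (c : ℝ) (hμC : μ C = ENNReal.ofReal c)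
    (K : Matrix (Fin du) (Fin dx) ℝ)
    (ε εval α : ℝ)
    (hε : ε ∈ Set.Ioo (0 : ℝ) 1) (hεval : εval ∈ Set.Ioo (0 : ℝ) 1)
    (hα : α ∈ Set.Ioo (0 : ℝ) 1)
    (M : ℕ)
    (hM : (M : ℝ) ≥ Real.log (1 / α) / (2 * εval ^ 2))
    (hp : μ {S | StabilizedBy K S} < ENNReal.ofReal (c - (ε + εval))) :
    (Measure.pi fun _ : Fin M => ProbabilityTheory.cond μ C)
      {ω | (1 - ε : ℝ) ≤ (Nat.card {i : Fin M // StabilizedBy K (ω i)} : ℝ) / M}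
      ≤ ENNReal.ofReal α := by
  -- the stability region is not known to be measurable; work with its measurable hull
  set E := toMeasurable μ {S | StabilizedBy K S}
  have hδ : 0 ≤ ε + εval := by linarith [hε.1, hεval.1]
  have hμE : μ E < ENNReal.ofReal (c - (ε + εval)) := by rwa [measure_toMeasurable]
  have hμC0 : μ C ≠ 0 := by
    rw [hμC, ne_eq, ENNReal.ofReal_eq_zero, not_le]
    linarith [sub_pos.1 (ENNReal.ofReal_pos.1 (zero_le.trans_lt hp))]
  have hν : IsProbabilityMeasure μ[|C] := cond_isProbabilityMeasure hμC0
  have hνE : (μ[|C]).real E ≤ 1 - (ε + εval) := measureReal_cond_le_one_sub μ hμC hδ hμE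
  have hM0 : 0 < M := by
    have hlogα : 0 < log (1 / α) := log_pos (one_lt_one_div hα.1 hα.2)
    exact_mod_cast (div_pos hlogα (by nlinarith [hεval.1])).trans_le hM
  have hpass := setOf_le_natCard_div_subset (subset_toMeasurable μ {S | StabilizedBy K S}) hM0
    (a := 1 - ε) (b := (μ[|C]).real E + εval) (by linarith)
  have hoeffding := measureReal_pi_natCard_mem_ge_le (ι := Fin M) μ[|C]
    (measurableSet_toMeasurable μ {S | StabilizedBy K S}) hεval.1.le
  rw [Fintype.card_fin] at hoeffding
  rw [ENNReal.le_ofReal_iff_toReal_le (measure_ne_top _ _) hα.1.le]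
  exact ((measureReal_mono hpass).trans hoeffding).trans (exp_neg_two_mul_mul_sq_le hα.1 hεval.1 hM)

/-- A-posteriori validation guarantee (Theorem 2 of the paper), contrapositive form:
sampling `M ≥ log(1/α)/(2 ε_val²)` i.i.d. validation scenarios from the conditional
(truncated) measure `μ(·|C)`, where `μ C = c > 0`; if the probability under the full
measure `μ` that `(A,B)` is stabilized by `K` is less than `c - (ε + ε_val)`, then the
probability that the empirical stability frequency over the validation samples is at
least `1 - ε` (i.e. that `K` passes validation) is at most `α`. -/
theorem truncated_validation_guarantee {dx du : ℕ}
    (μ : Measure (Matrix (Fin dx) (Fin dx) ℝ × Matrix (Fin dx) (Fin du) ℝ))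
    [IsProbabilityMeasure μ]
    (C : Set (Matrix (Fin dx) (Fin dx) ℝ × Matrix (Fin dx) (Fin du) ℝ))
    (hCmeas : MeasurableSet C)
    (c : ℝ) (hc : 0 < c) (hμC : μ C = ENNReal.ofReal c)
    (K : Matrix (Fin du) (Fin dx) ℝ)
    (ε εval α : ℝ)
    (hε : ε ∈ Set.Ioo (0 : ℝ) 1) (hεval : εval ∈ Set.Ioo (0 : ℝ) 1)
    (hα : α ∈ Set.Ioo (0 : ℝ) 1)
    (M : ℕ)
    (hM : (M : ℝ) ≥ Real.log (1 / α) / (2 * εval ^ 2))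
    (hp : μ {S | StabilizedBy K S} < ENNReal.ofReal (c - (ε + εval))) :
    (Measure.pi fun _ : Fin M => ProbabilityTheory.cond μ C)
      {ω | (1 - ε : ℝ) ≤ (Nat.card {i : Fin M // StabilizedBy K (ω i)} : ℝ) / M}
      ≤ ENNReal.ofReal α :=
  truncated_validation_guarantee_general μ C c hμC K ε εval α hε hεval hα M hM hp
end

section
/- Let ε ∈ (0,1), β ∈ (0,1), and let n ≥ 1 be a natural number. If the natural number M satisfies M ≥ (2/ε)·(n − 1 + log(1/β)), then the binomial tail satisfies Σ_{i=0}^{n−1} (M choose i) · εⁱ · (1 − ε)^{M−i} ≤ β. -/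
/-!
Scaling the `i`-th term by `2 ^ (n - 1 - i) ≥ 1` dominates the tail by `2 ^ (n - 1)` times the
full binomial expansion of `(ε / 2 + (1 - ε)) ^ M`. Then `2 ≤ e` and `1 - x ≤ e^(-x)` give the bound
`exp ((n - 1) - ε M / 2)`, and the sample-size condition says exactly that this exponent is at most
`log β`.
-/

open Finset Real

theorem sum_range_choose_mul_pow_le_add_pow {x y : ℝ} (hx : 0 ≤ x) (hy : 0 ≤ y) (n M : ℕ) :
    ∑ i ∈ range n, (M.choose i : ℝ) * x ^ i * y ^ (M - i) ≤ (x + y) ^ M := by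
  set f : ℕ → ℝ := fun i ↦ (M.choose i : ℝ) * x ^ i * y ^ (M - i)
  calc ∑ i ∈ range n, f i ≤ ∑ i ∈ range (max n (M + 1)), f i :=
        sum_le_sum_of_subset_of_nonneg (range_subset_range.2 (le_max_left _ _))
          fun _ _ _ ↦ by positivity
    _ = ∑ i ∈ range (M + 1), f i := by
        refine (sum_subset (range_subset_range.2 (le_max_right _ _)) fun i _ hi ↦ ?_).symm
        simp [f, Nat.choose_eq_zero_of_lt (not_lt.1 (mt mem_range.2 hi))]
    _ = (x + y) ^ M := by
        rw [add_pow]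
        exact sum_congr rfl fun i _ ↦ by ring

theorem sum_range_succ_choose_mul_pow_le {x y t : ℝ} (hx : 0 ≤ x) (hy : 0 ≤ y) (ht : 1 ≤ t)
    (k M : ℕ) :
    ∑ i ∈ range (k + 1), (M.choose i : ℝ) * x ^ i * y ^ (M - i) ≤ t ^ k * (x / t + y) ^ M := by
  have ht0 : 0 < t := by linarith
  calc ∑ i ∈ range (k + 1), (M.choose i : ℝ) * x ^ i * y ^ (M - i)
      ≤ ∑ i ∈ range (k + 1), t ^ k * ((M.choose i : ℝ) * (x / t) ^ i * y ^ (M - i)) := by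
        refine sum_le_sum fun i hi ↦ ?_
        have hx_pow : x ^ i ≤ t ^ k * (x / t) ^ i :=
          calc x ^ i = t ^ i * (x / t) ^ i := by rw [← mul_pow, mul_div_cancel₀ x ht0.ne']
            _ ≤ t ^ k * (x / t) ^ i := by
              gcongr
              exact Nat.lt_succ_iff.1 (mem_range.1 hi)
        calc (M.choose i : ℝ) * x ^ i * y ^ (M - i)
            ≤ (M.choose i : ℝ) * (t ^ k * (x / t) ^ i) * y ^ (M - i) := by gcongr
          _ = t ^ k * ((M.choose i : ℝ) * (x / t) ^ i * y ^ (M - i)) := by ring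
    _ = t ^ k * ∑ i ∈ range (k + 1), (M.choose i : ℝ) * (x / t) ^ i * y ^ (M - i) := by
        rw [mul_sum]
    _ ≤ t ^ k * (x / t + y) ^ M := by
        gcongr
        exact sum_range_choose_mul_pow_le_add_pow (by positivity) hy _ _

theorem two_pow_le_exp (k : ℕ) : (2 : ℝ) ^ k ≤ exp k := by
  rw [← exp_one_pow]
  gcongr
  linarith [add_one_le_exp (1 : ℝ)]

theorem one_sub_pow_le_exp_neg_mul {a : ℝ} (ha : a ≤ 1) (M : ℕ) : (1 - a) ^ M ≤ exp (-(M * a)) :=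
  calc (1 - a) ^ M ≤ exp (-a) ^ M := pow_le_pow_left₀ (by linarith) (one_sub_le_exp_neg a) M
    _ = exp (-(M * a)) := by rw [← exp_nat_mul, mul_neg]

theorem scenario_sample_size_binomial_tail_general
    (ε β : ℝ) (hε : ε ∈ Set.Ioo (0 : ℝ) 1) (hβ : β ∈ Set.Ioo (0 : ℝ) 1)
    (n : ℕ) (M : ℕ)
    (hM : (M : ℝ) ≥ (2 / ε) * ((n : ℝ) - 1 + Real.log (1 / β))) :
    ∑ i ∈ Finset.range n, (M.choose i : ℝ) * ε ^ i * (1 - ε) ^ (M - i) ≤ β := by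
  obtain ⟨hε0, hε1⟩ := hε
  rcases n with _ | k
  · simpa using hβ.1.le
  have hexponent : (k : ℝ) - M * (ε / 2) ≤ log β := by
    rw [ge_iff_le, div_mul_eq_mul_div, div_le_iff₀ hε0] at hM
    push_cast at hM
    rw [one_div, log_inv] at hM
    linarith
  calc ∑ i ∈ range (k + 1), (M.choose i : ℝ) * ε ^ i * (1 - ε) ^ (M - i)
      ≤ 2 ^ k * (ε / 2 + (1 - ε)) ^ M :=
        sum_range_succ_choose_mul_pow_le hε0.le (by linarith) one_le_two k M
    _ = 2 ^ k * (1 - ε / 2) ^ M := by ring_nf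
    _ ≤ exp k * exp (-(M * (ε / 2))) :=
        mul_le_mul (two_pow_le_exp k) (one_sub_pow_le_exp_neg_mul (by linarith) M)
          (pow_nonneg (by linarith) M) (exp_pos _).le
    _ ≤ β := by
        rw [← exp_add, ← sub_eq_add_neg, ← exp_log hβ.1]
        exact exp_le_exp.2 hexponent

/-- Explicit sample-size bound for the scenario approach: for `ε, β ∈ (0,1)` and `n ≥ 1`,
if the natural number `M` satisfies `M ≥ (2/ε)·(n - 1 + log(1/β))`, then the binomial tail
`∑_{i=0}^{n-1} (M choose i) εⁱ (1-ε)^{M-i}` is at most `β`. -/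
theorem scenario_sample_size_binomial_tail
    (ε β : ℝ) (hε : ε ∈ Set.Ioo (0 : ℝ) 1) (hβ : β ∈ Set.Ioo (0 : ℝ) 1)
    (n : ℕ) (hn : 1 ≤ n) (M : ℕ)
    (hM : (M : ℝ) ≥ (2 / ε) * ((n : ℝ) - 1 + Real.log (1 / β))) :
    ∑ i ∈ Finset.range n, (M.choose i : ℝ) * ε ^ i * (1 - ε) ^ (M - i) ≤ β :=
  scenario_sample_size_binomial_tail_general ε β hε hβ n M hM
end
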